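/- arXiv:1607.03174 — 4 statements merged into one kernel-verified Lean document; each statement's English description precedes it below -/
import Mathlib

section
/- Let (M̃, g̃) be a complete simply connected Riemannian manifold with all sectional curvatures in [-1, 0], let γ̃ be a unit speed geodesic with γ̃(0) = p, and fix R > 0. For T > 0 define θ_T by sin(θ_T/2) = sinh(R/2)/sinh(T). Then for T sufficiently large, every point q with d(p,q) ≤ T and angle ∠(γ̃'(0), ±∇₁d(p,q)) ≤ θ_T for some choice of sign satisfies d(q, γ̃) ≤ R, where d(q, γ̃) = inf_t d(q, γ̃(t)). -/
open Set

/-- Key computation: if `cosh D ≤ cosh d ^2 - sinh d ^2 * cos α` with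
`0 ≤ d ≤ T`, `α ∈ [0, π]`, `α ≤ 2 arcsin (sinh (R/2) / sinh T)`, `R ≤ T`, `0 < R`,
then `D ≤ R`. -/
lemma stmt3_key (R T d α D : ℝ) (hR : 0 < R) (hRT : R ≤ T)
    (hd0 : 0 ≤ d) (hdT : d ≤ T) (hα : α ∈ Icc 0 Real.pi)
    (hD0 : 0 ≤ D)
    (hcomp : Real.cosh D ≤ Real.cosh d * Real.cosh d - Real.sinh d * Real.sinh d * Real.cos α)
    (hαθ : α ≤ 2 * Real.arcsin (Real.sinh (R / 2) / Real.sinh T)) :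
    D ≤ R := by
  set x := Real.sinh (R / 2) / Real.sinh T with hx
  have hT0 : 0 < T := lt_of_lt_of_le hR hRT
  have hsT : 0 < Real.sinh T := Real.sinh_pos_iff.2 hT0
  have hsR2 : 0 ≤ Real.sinh (R / 2) := Real.sinh_nonneg_iff.2 (by linarith)
  have hx0 : 0 ≤ x := div_nonneg hsR2 hsT.le
  have hx1 : x ≤ 1 := by
    rw [hx, div_le_one hsT]
    exact Real.sinh_le_sinh.2 (by linarith)
  -- sin (α/2) ≤ x
  have harcsin : Real.sin (Real.arcsin x) = x := Real.sin_arcsin (by linarith) hx1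
  have hsin : Real.sin (α / 2) ≤ x := by
    have h1 : α / 2 ≤ Real.arcsin x := by linarith
    have h2 : -(Real.pi / 2) ≤ α / 2 := by
      have := hα.1; linarith [Real.pi_pos]
    have h3 : Real.arcsin x ≤ Real.pi / 2 := Real.arcsin_le_pi_div_two x
    calc Real.sin (α / 2) ≤ Real.sin (Real.arcsin x) :=
          Real.strictMonoOn_sin.monotoneOn ⟨h2, by linarith⟩
            ⟨Real.neg_pi_div_two_le_arcsin x, h3⟩ h1
      _ = x := harcsin
  have hsin0 : 0 ≤ Real.sin (α / 2) := by
    apply Real.sin_nonneg_of_nonneg_of_le_pi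
    · linarith [hα.1]
    · linarith [hα.2, Real.pi_pos]
  -- cos α = 1 - 2 sin (α/2) ^ 2
  have hcos : Real.cos α = 1 - 2 * Real.sin (α / 2) ^ 2 := by
    have h1 : Real.cos (2 * (α / 2)) = 2 * Real.cos (α / 2) ^ 2 - 1 := Real.cos_two_mul _
    have h2 : Real.cos (α / 2) ^ 2 = 1 - Real.sin (α / 2) ^ 2 := Real.cos_sq' _
    have : 2 * (α / 2) = α := by ring
    rw [this] at h1
    rw [h1, h2]; ring
  -- sinh d ≤ sinh T
  have hsd0 : 0 ≤ Real.sinh d := Real.sinh_nonneg_iff.2 hd0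
  have hsdT : Real.sinh d ≤ Real.sinh T := Real.sinh_le_sinh.2 hdT
  -- cosh d ^2 = 1 + sinh d ^2
  have hchd : Real.cosh d ^ 2 = 1 + Real.sinh d ^ 2 := by
    have := Real.cosh_sq d; linarith
  -- cosh R = 1 + 2 * sinh (R/2) ^ 2
  have hchR : Real.cosh R = 1 + 2 * Real.sinh (R / 2) ^ 2 := by
    have h1 := Real.cosh_two_mul (R / 2)
    have h2 : Real.cosh (R / 2) ^ 2 = 1 + Real.sinh (R / 2) ^ 2 := by
      have := Real.cosh_sq (R / 2); linarith
    have h3 : 2 * (R / 2) = R := by ring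
    rw [h3] at h1
    rw [h1, h2]; ring
  -- main estimate
  have hxx : Real.sinh (R / 2) = x * Real.sinh T := by
    rw [hx]; field_simp
  have hmain : Real.cosh D ≤ Real.cosh R := by
    have e1 : Real.cosh d * Real.cosh d - Real.sinh d * Real.sinh d * Real.cos α
        = 1 + 2 * Real.sinh d ^ 2 * Real.sin (α / 2) ^ 2 := by
      rw [hcos]; linear_combination hchd
    have e2 : Real.sinh d ^ 2 * Real.sin (α / 2) ^ 2 ≤ Real.sinh T ^ 2 * x ^ 2 :=
      mul_le_mul (by nlinarith) (by nlinarith) (by positivity) (by positivity)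
    have h4 : Real.sinh (R / 2) ^ 2 = Real.sinh T ^ 2 * x ^ 2 := by rw [hxx]; ring
    rw [hchR]
    rw [e1] at hcomp
    linarith
  have := (Real.cosh_le_cosh.1 hmain)
  rw [abs_of_nonneg hD0, abs_of_nonneg hR.le] at this
  exact this

/-- Proposition 2.3 (Toponogov cone containment). `M` is a complete simply connected manifold
with sectional curvatures in `[-1,0]`, abstracted as a metric space together with a unit speed
geodesic `γ` through `p = γ 0` and an angle function `ang q = ∠(γ'(0), -∇₁d(p,q))`
(the angle at `p` between the forward direction of `γ` and the direction from `p` to `q`),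
satisfying the Toponogov comparison inequality with the hyperbolic plane (curvature `-1`).
Then for `T` sufficiently large, any `q` with `d(p,q) ≤ T` making angle at most `θ_T`
(where `sin(θ_T/2) = sinh(R/2)/sinh T`) with `γ'(0)` or `-γ'(0)` lies in the tube of
radius `R` about `γ`. -/
theorem stmt3 (M : Type*) [MetricSpace M] (R : ℝ) (hR : 0 < R)
    (γ : ℝ → M) (p : M) (hp : γ 0 = p)
    -- `γ` is a unit speed geodesic line (in a Cartan–Hadamard manifold geodesics are minimizing)
    (hgeo : ∀ s t : ℝ, dist (γ s) (γ t) = |s - t|)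
    (ang : M → ℝ) (hang : ∀ q, ang q ∈ Icc 0 Real.pi)
    -- Toponogov comparison (curvature bounded below by -1) for triangles `p, q, γ(±t)`
    (htopoPlus : ∀ q : M, ∀ t ≥ (0:ℝ),
      Real.cosh (dist q (γ t)) ≤
        Real.cosh (dist p q) * Real.cosh t -
          Real.sinh (dist p q) * Real.sinh t * Real.cos (ang q))
    (htopoMinus : ∀ q : M, ∀ t ≥ (0:ℝ),
      Real.cosh (dist q (γ (-t))) ≤
        Real.cosh (dist p q) * Real.cosh t -
          Real.sinh (dist p q) * Real.sinh t * Real.cos (Real.pi - ang q)) :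
    ∃ T₀ : ℝ, ∀ T ≥ T₀, ∀ q : M,
      dist p q ≤ T →
      (ang q ≤ 2 * Real.arcsin (Real.sinh (R / 2) / Real.sinh T) ∨
        Real.pi - ang q ≤ 2 * Real.arcsin (Real.sinh (R / 2) / Real.sinh T)) →
      Metric.infDist q (Set.range γ) ≤ R := by
  refine ⟨R, fun T hT q hdq hcase => ?_⟩
  have hd0 : 0 ≤ dist p q := dist_nonneg
  set d := dist p q with hd
  rcases hcase with h | h
  · have hD : dist q (γ d) ≤ R := by
      apply stmt3_key R T d (ang q) (dist q (γ d)) hR hT hd0 hdq (hang q) dist_nonneg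
        _ h
      exact htopoPlus q d hd0
    calc Metric.infDist q (Set.range γ) ≤ dist q (γ d) :=
          Metric.infDist_le_dist_of_mem ⟨d, rfl⟩
      _ ≤ R := hD
  · have hD : dist q (γ (-d)) ≤ R := by
      have hmem : Real.pi - ang q ∈ Icc 0 Real.pi := by
        constructor
        · linarith [(hang q).2]
        · linarith [(hang q).1]
      apply stmt3_key R T d (Real.pi - ang q) (dist q (γ (-d))) hR hT hd0 hdq hmem
        dist_nonneg _ h
      exact htopoMinus q d hd0
    calc Metric.infDist q (Set.range γ) ≤ dist q (γ (-d)) :=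
          Metric.infDist_le_dist_of_mem ⟨-d, rfl⟩
      _ ≤ R := hD
end

section
/- Let γ, η : [0,1] → M̃ be unit speed geodesics in a complete simply connected Riemannian manifold of nonpositive curvature with disjoint images, and let φ(r,s) = d(η(r), γ(s)). Fix (r₀,s₀), set ρ₀ = φ(r₀,s₀), and let σ : [0,ρ₀] → M̃ be the unit speed geodesic from η(r₀) to γ(s₀). Let V_t, W_t be the Jacobi fields along σ with V₀ = η'(r₀), V_{ρ₀} = 0, W₀ = 0, W_{ρ₀} = γ'(s₀). Then ∂²_{rs} φ(r₀,s₀) = −⟨V₀^⊥, D_t W₀^⊥⟩. -/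
open Set

section ChartModel

variable {E : Type*} [NormedAddCommGroup E] [InnerProductSpace ℝ E]

/-- Covariant derivative, along the curve `c`, of the vector field `X` along `c`, for the
connection with Christoffel symbol `Γ`, in a global chart (the universal cover is
diffeomorphic to `ℝⁿ`, so its tangent bundle is trivialized by a single chart `E`). -/
noncomputable def covD (Γ : E → E → E → E) (c X : ℝ → E) : ℝ → E :=
  fun t => deriv X t + Γ (c t) (deriv c t) (X t)

/-- Curvature endomorphism `R(u,v)w` of the connection `Γ` in the chart. -/
noncomputable def curvOp (Γ : E → E → E → E) (x u v w : E) : E :=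
  fderiv ℝ (fun y => Γ y v w) x u - fderiv ℝ (fun y => Γ y u w) x v
    + Γ x u (Γ x v w) - Γ x v (Γ x u w)

/-- Partial derivative in the first variable. -/
noncomputable def pd1 (f : ℝ → ℝ → ℝ) (r s : ℝ) : ℝ := deriv (fun x => f x s) r

/-- Partial derivative in the second variable. -/
noncomputable def pd2 (f : ℝ → ℝ → ℝ) (r s : ℝ) : ℝ := deriv (fun y => f r y) s

section AuxHelpers

variable {F : Type*} [NormedAddCommGroup F] [NormedSpace ℝ F]

lemma slice3_1 {f : ℝ × ℝ × ℝ → F} {r s t : ℝ} (hf : DifferentiableAt ℝ f (r, s, t)) :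
    HasDerivAt (fun x => f (x, s, t)) (fderiv ℝ f (r, s, t) (1, 0, 0)) r := by
  have hl : HasDerivAt (fun x : ℝ => ((x, s, t) : ℝ × ℝ × ℝ)) (1, (0 : ℝ × ℝ)) r :=
    (hasDerivAt_id r).prodMk (hasDerivAt_const r (s, t))
  exact hf.hasFDerivAt.comp_hasDerivAt r hl

lemma slice3_2 {f : ℝ × ℝ × ℝ → F} {r s t : ℝ} (hf : DifferentiableAt ℝ f (r, s, t)) :
    HasDerivAt (fun y => f (r, y, t)) (fderiv ℝ f (r, s, t) (0, 1, 0)) s := by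
  have hl : HasDerivAt (fun y : ℝ => ((r, y, t) : ℝ × ℝ × ℝ)) (0, 1, 0) s :=
    (hasDerivAt_const s r).prodMk ((hasDerivAt_id s).prodMk (hasDerivAt_const s t))
  exact hf.hasFDerivAt.comp_hasDerivAt s hl

lemma slice3_3 {f : ℝ × ℝ × ℝ → F} {r s t : ℝ} (hf : DifferentiableAt ℝ f (r, s, t)) :
    HasDerivAt (fun z => f (r, s, z)) (fderiv ℝ f (r, s, t) (0, 0, 1)) t := by
  have hl : HasDerivAt (fun z : ℝ => ((r, s, z) : ℝ × ℝ × ℝ)) (0, 0, 1) t :=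
    (hasDerivAt_const t r).prodMk ((hasDerivAt_const t s).prodMk (hasDerivAt_id t))
  exact hf.hasFDerivAt.comp_hasDerivAt t hl

lemma slice2_1 {f : ℝ × ℝ → F} {r s : ℝ} (hf : DifferentiableAt ℝ f (r, s)) :
    HasDerivAt (fun x => f (x, s)) (fderiv ℝ f (r, s) (1, 0)) r := by
  have hl : HasDerivAt (fun x : ℝ => ((x, s) : ℝ × ℝ)) (1, 0) r :=
    (hasDerivAt_id r).prodMk (hasDerivAt_const r s)
  exact hf.hasFDerivAt.comp_hasDerivAt r hl

lemma slice2_2 {f : ℝ × ℝ → F} {r s : ℝ} (hf : DifferentiableAt ℝ f (r, s)) :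
    HasDerivAt (fun y => f (r, y)) (fderiv ℝ f (r, s) (0, 1)) s := by
  have hl : HasDerivAt (fun y : ℝ => ((r, y) : ℝ × ℝ)) (0, 1) s :=
    (hasDerivAt_const s r).prodMk (hasDerivAt_id s)
  exact hf.hasFDerivAt.comp_hasDerivAt s hl

variable {G : E → E → E → ℝ} {Γ : E → E → E → E}

lemma G_zero_left (hGsmul : ∀ (x : E) (a : ℝ) (u w : E), G x (a • u) w = a * G x u w)
    (x w : E) : G x 0 w = 0 := by
  have := hGsmul x 0 0 w
  simpa using this

lemma G_sub_left (hGadd : ∀ x u v w, G x (u + v) w = G x u w + G x v w)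
    (hGsmul : ∀ (x : E) (a : ℝ) (u w : E), G x (a • u) w = a * G x u w)
    (x u v w : E) : G x (u - v) w = G x u w - G x v w := by
  rw [sub_eq_add_neg, ← neg_one_smul ℝ v, hGadd, hGsmul]; ring

lemma Γ_zero_right (hΓsmul : ∀ (x : E) (a : ℝ) (u w : E), Γ x u (a • w) = a • Γ x u w)
    (x u : E) : Γ x u 0 = 0 := by
  have := hΓsmul x 0 u 0
  simpa using this

lemma fderivG_apply
    (hGsmooth : ContDiff ℝ (⊤ : ℕ∞) (fun p : E × E × E => G p.1 p.2.1 p.2.2))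
    (hGsymm : ∀ x u v, G x u v = G x v u)
    (hGadd : ∀ x u v w, G x (u + v) w = G x u w + G x v w)
    (hGsmul : ∀ (x : E) (a : ℝ) (u w : E), G x (a • u) w = a * G x u w)
    (x u v a b c : E) :
    fderiv ℝ (fun p : E × E × E => G p.1 p.2.1 p.2.2) (x, u, v) (a, b, c)
      = fderiv ℝ (fun y => G y u v) x a + G x b v + G x u c := by
  set Gf : E × E × E → ℝ := fun p => G p.1 p.2.1 p.2.2 with hGf
  have hdiff : DifferentiableAt ℝ Gf (x, u, v) := (hGsmooth.differentiable (by simp)) _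
  have hx : DifferentiableAt ℝ (fun y => G y u v) x := by
    have : (fun y : E => G y u v) = fun y : E => Gf (y, u, v) := rfl
    rw [this]
    exact hdiff.comp (f := fun y : E => ((y, u, v) : E × E × E)) x (by fun_prop)
  have hline1 : HasDerivAt (fun ε : ℝ => ((x + ε • a, u, v) : E × E × E)) (a, 0, 0) 0 := by
    have h1 : HasDerivAt (fun ε : ℝ => x + ε • a) a 0 := by
      simpa using (((hasDerivAt_id (0:ℝ)).smul_const a).const_add x)
    exact h1.prodMk (hasDerivAt_const 0 (u, v))
  have l1 : HasDerivAt (fun ε : ℝ => Gf (x + ε • a, u, v)) (fderiv ℝ Gf (x, u, v) (a, 0, 0)) 0 :=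
    hdiff.hasFDerivAt.comp_hasDerivAt_of_eq 0 hline1 (by simp)
  have l1' : HasDerivAt (fun ε : ℝ => Gf (x + ε • a, u, v))
      (fderiv ℝ (fun y => G y u v) x a) 0 := by
    have h1 : HasDerivAt (fun ε : ℝ => x + ε • a) a 0 := by
      simpa using (((hasDerivAt_id (0:ℝ)).smul_const a).const_add x)
    exact hx.hasFDerivAt.comp_hasDerivAt_of_eq 0 h1 (by simp)
  have hline2 : HasDerivAt (fun ε : ℝ => ((x, u + ε • b, v) : E × E × E)) (0, b, 0) 0 := by
    have h1 : HasDerivAt (fun ε : ℝ => u + ε • b) b 0 := by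
      simpa using (((hasDerivAt_id (0:ℝ)).smul_const b).const_add u)
    exact (hasDerivAt_const 0 x).prodMk (h1.prodMk (hasDerivAt_const 0 v))
  have l2 : HasDerivAt (fun ε : ℝ => Gf (x, u + ε • b, v)) (fderiv ℝ Gf (x, u, v) (0, b, 0)) 0 :=
    hdiff.hasFDerivAt.comp_hasDerivAt_of_eq 0 hline2 (by simp)
  have l2' : HasDerivAt (fun ε : ℝ => Gf (x, u + ε • b, v)) (G x b v) 0 := by
    have heq : (fun ε : ℝ => Gf (x, u + ε • b, v)) = fun ε : ℝ => G x u v + ε * G x b v := by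
      funext ε
      show G x (u + ε • b) v = _
      rw [hGadd, hGsmul]
    rw [heq]
    simpa using (((hasDerivAt_id (0:ℝ)).mul_const (G x b v)).const_add (G x u v))
  have hline3 : HasDerivAt (fun ε : ℝ => ((x, u, v + ε • c) : E × E × E)) (0, 0, c) 0 := by
    have h1 : HasDerivAt (fun ε : ℝ => v + ε • c) c 0 := by
      simpa using (((hasDerivAt_id (0:ℝ)).smul_const c).const_add v)
    exact (hasDerivAt_const 0 x).prodMk ((hasDerivAt_const 0 u).prodMk h1)
  have l3 : HasDerivAt (fun ε : ℝ => Gf (x, u, v + ε • c)) (fderiv ℝ Gf (x, u, v) (0, 0, c)) 0 :=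
    hdiff.hasFDerivAt.comp_hasDerivAt_of_eq 0 hline3 (by simp)
  have l3' : HasDerivAt (fun ε : ℝ => Gf (x, u, v + ε • c)) (G x u c) 0 := by
    have heq : (fun ε : ℝ => Gf (x, u, v + ε • c)) = fun ε : ℝ => G x u v + ε * G x u c := by
      funext ε
      show G x u (v + ε • c) = _
      rw [hGsymm x u, hGadd, hGsmul, hGsymm x v u, hGsymm x c u]
    rw [heq]
    simpa using (((hasDerivAt_id (0:ℝ)).mul_const (G x u c)).const_add (G x u v))
  have hsplit : ((a, b, c) : E × E × E) = (a, 0, 0) + (0, b, 0) + (0, 0, c) := by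
    simp [Prod.ext_iff]
  rw [hsplit, map_add, map_add, l1.unique l1', l2.unique l2', l3.unique l3']

lemma hasDerivAt_G3
    (hGsmooth : ContDiff ℝ (⊤ : ℕ∞) (fun p : E × E × E => G p.1 p.2.1 p.2.2))
    (hGsymm : ∀ x u v, G x u v = G x v u)
    (hGadd : ∀ x u v w, G x (u + v) w = G x u w + G x v w)
    (hGsmul : ∀ (x : E) (a : ℝ) (u w : E), G x (a • u) w = a * G x u w)
    {x A B : ℝ → E} {x' A' B' : E} {s : ℝ}
    (hx : HasDerivAt x x' s) (hA : HasDerivAt A A' s) (hB : HasDerivAt B B' s) :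
    HasDerivAt (fun τ => G (x τ) (A τ) (B τ))
      (fderiv ℝ (fun y => G y (A s) (B s)) (x s) x' + G (x s) A' (B s) + G (x s) (A s) B') s := by
  have htriple : HasDerivAt (fun τ => ((x τ, A τ, B τ) : E × E × E)) (x', A', B') s :=
    hx.prodMk (hA.prodMk hB)
  have hdiff : DifferentiableAt ℝ (fun p : E × E × E => G p.1 p.2.1 p.2.2)
      (x s, A s, B s) := (hGsmooth.differentiable (by simp)) _
  have h := hdiff.hasFDerivAt.comp_hasDerivAt s htriple
  rwa [fderivG_apply hGsmooth hGsymm hGadd hGsmul] at h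

lemma hasDerivAt_G_cov
    (hGsmooth : ContDiff ℝ (⊤ : ℕ∞) (fun p : E × E × E => G p.1 p.2.1 p.2.2))
    (hGsymm : ∀ x u v, G x u v = G x v u)
    (hGadd : ∀ x u v w, G x (u + v) w = G x u w + G x v w)
    (hGsmul : ∀ (x : E) (a : ℝ) (u w : E), G x (a • u) w = a * G x u w)
    (hcompat : ∀ x u v w,
      fderiv ℝ (fun y => G y v w) x u = G x (Γ x u v) w + G x v (Γ x u w))
    {x A B : ℝ → E} {x' A' B' : E} {s : ℝ}
    (hx : HasDerivAt x x' s) (hA : HasDerivAt A A' s) (hB : HasDerivAt B B' s) :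
    HasDerivAt (fun τ => G (x τ) (A τ) (B τ))
      (G (x s) (A' + Γ (x s) x' (A s)) (B s) + G (x s) (A s) (B' + Γ (x s) x' (B s))) s := by
  have h := hasDerivAt_G3 hGsmooth hGsymm hGadd hGsmul hx hA hB
  rw [hcompat] at h
  have e1 : G (x s) (A' + Γ (x s) x' (A s)) (B s)
      = G (x s) A' (B s) + G (x s) (Γ (x s) x' (A s)) (B s) := hGadd _ _ _ _
  have e2 : G (x s) (A s) (B' + Γ (x s) x' (B s))
      = G (x s) (A s) B' + G (x s) (A s) (Γ (x s) x' (B s)) := by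
    rw [hGsymm _ (A s), hGadd, hGsymm _ B' (A s), hGsymm _ (Γ (x s) x' (B s)) (A s)]
  rw [e1, e2]
  convert h using 1
  ring

end AuxHelpers

/-- Second variation formula (3.9): `∂²_{rs} φ(r₀,s₀) = −⟨V₀^⊥, D_t W₀^⊥⟩`.
The simply connected nonpositively curved manifold `M̃` is presented in a global chart `E`
(Cartan–Hadamard), with Riemannian metric `G`, Levi-Civita connection `Γ` (torsion-free and
metric-compatible), nonpositive sectional curvature, disjoint unit speed geodesics `η, γ`,
distance `φ(r,s) = d(η(r),γ(s))` realized as the length of the connecting geodesic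
`t ↦ Ψ(r,s,t)`, `t ∈ [0,ρ₀]`, and `σ = Ψ(r₀,s₀,·)` unit speed with `ρ₀ = φ(r₀,s₀)`.
`V, W` are the Jacobi fields `∂_rΨ, ∂_sΨ` at `(r₀,s₀)`; `⊥` is the component
`X - ⟨X,σ'(0)⟩σ'(0)` orthogonal to `σ'(0)` for the metric `G` at `σ(0) = η(r₀)`. -/
theorem stmt8
    (G : E → E → E → ℝ) (Γ : E → E → E → E)
    (η γ : ℝ → E) (Ψ : ℝ → ℝ → ℝ → E) (φ : ℝ → ℝ → ℝ) (ρ₀ r₀ s₀ : ℝ)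
    -- the metric tensor: smooth, symmetric, bilinear, positive definite
    (hGsmooth : ContDiff ℝ (⊤ : ℕ∞) (fun p : E × E × E => G p.1 p.2.1 p.2.2))
    (hGsymm : ∀ x u v, G x u v = G x v u)
    (hGadd : ∀ x u v w, G x (u + v) w = G x u w + G x v w)
    (hGsmul : ∀ (x : E) (a : ℝ) (u w : E), G x (a • u) w = a * G x u w)
    (hGpos : ∀ (x : E) (v : E), v ≠ 0 → 0 < G x v v)
    -- the Levi-Civita connection: smooth, symmetric (torsion-free), bilinear, compatible with G
    (hΓsmooth : ContDiff ℝ (⊤ : ℕ∞) (fun p : E × E × E => Γ p.1 p.2.1 p.2.2))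
    (hΓsymm : ∀ x u v, Γ x u v = Γ x v u)
    (hΓadd : ∀ x u v w, Γ x u (v + w) = Γ x u v + Γ x u w)
    (hΓsmul : ∀ (x : E) (a : ℝ) (u w : E), Γ x u (a • w) = a • Γ x u w)
    (hcompat : ∀ x u v w,
      fderiv ℝ (fun y => G y v w) x u = G x (Γ x u v) w + G x v (Γ x u w))
    -- nonpositive sectional curvature
    (hnonpos : ∀ x u v, G x (curvOp Γ x u v v) u ≤ 0)
    -- `η, γ` are disjoint unit speed geodesics on `[0,1]`
    (hηgeo : ∀ r, covD Γ η (deriv η) r = 0)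
    (hγgeo : ∀ s, covD Γ γ (deriv γ) s = 0)
    (hηunit : ∀ r, G (η r) (deriv η r) (deriv η r) = 1)
    (hγunit : ∀ s, G (γ s) (deriv γ s) (deriv γ s) = 1)
    (hdisj : ∀ r ∈ Icc (0:ℝ) 1, ∀ s ∈ Icc (0:ℝ) 1, η r ≠ γ s)
    -- `Ψ` is the smooth variation through connecting geodesics
    (hΨsmooth : ContDiff ℝ (⊤ : ℕ∞) (fun p : ℝ × ℝ × ℝ => Ψ p.1 p.2.1 p.2.2))
    (hΨgeo : ∀ r s t, covD Γ (Ψ r s) (deriv (Ψ r s)) t = 0)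
    (hΨ0 : ∀ r s, Ψ r s 0 = η r) (hΨρ : ∀ r s, Ψ r s ρ₀ = γ s)
    -- `φ(r,s) = d(η(r),γ(s))` is the length of the connecting geodesic
    (hφ : ∀ r s, φ r s =
      ∫ t in (0:ℝ)..ρ₀, Real.sqrt (G (Ψ r s t) (deriv (Ψ r s) t) (deriv (Ψ r s) t)))
    (hρpos : 0 < ρ₀) (hρ₀ : ρ₀ = φ r₀ s₀)
    (hr₀ : r₀ ∈ Icc (0:ℝ) 1) (hs₀ : s₀ ∈ Icc (0:ℝ) 1) :
    let σ := Ψ r₀ s₀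
    let p := σ 0
    let e := deriv σ 0
    let V : ℝ → E := fun t => deriv (fun r => Ψ r s₀ t) r₀
    let W : ℝ → E := fun t => deriv (fun s => Ψ r₀ s t) s₀
    let DtW0 := covD Γ σ W 0
    let perp : E → E := fun X => X - (G p X e) • e
    pd1 (pd2 φ) r₀ s₀ = -(G p (perp (V 0)) (perp DtW0)) := by
  intro σ p e V W DtW0 perp
  -- basic objects
  set Ψf : ℝ × ℝ × ℝ → E := fun q => Ψ q.1 q.2.1 q.2.2 with hΨfdef
  have hΨfC : ContDiff ℝ (⊤ : ℕ∞) Ψf := hΨsmooth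
  have hΨfd : Differentiable ℝ Ψf := hΨfC.differentiable (by simp)
  set T : ℝ × ℝ × ℝ → E := fun q => fderiv ℝ Ψf q (0, 0, 1) with hTdef
  set Vr : ℝ × ℝ × ℝ → E := fun q => fderiv ℝ Ψf q (1, 0, 0) with hVrdef
  set Vs : ℝ × ℝ × ℝ → E := fun q => fderiv ℝ Ψf q (0, 1, 0) with hVsdef
  have hDΨC : ContDiff ℝ (⊤ : ℕ∞) (fderiv ℝ Ψf) := hΨfC.fderiv_right (by simp)
  have hTC : ContDiff ℝ (⊤ : ℕ∞) T := hDΨC.clm_apply contDiff_const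
  have hVrC : ContDiff ℝ (⊤ : ℕ∞) Vr := hDΨC.clm_apply contDiff_const
  have hVsC : ContDiff ℝ (⊤ : ℕ∞) Vs := hDΨC.clm_apply contDiff_const
  have hT : ∀ r s t, HasDerivAt (Ψ r s) (T (r, s, t)) t := fun r s t =>
    slice3_3 (hΨfd _)
  have hVrD : ∀ r s t, HasDerivAt (fun x => Ψ x s t) (Vr (r, s, t)) r := fun r s t =>
    slice3_1 (hΨfd _)
  have hVsD : ∀ r s t, HasDerivAt (fun y => Ψ r y t) (Vs (r, s, t)) s := fun r s t =>
    slice3_2 (hΨfd _)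
  have hderivΨ : ∀ r s, deriv (Ψ r s) = fun t => T (r, s, t) := fun r s =>
    funext fun t => (hT r s t).deriv
  -- Clairaut-type swaps
  have hswapgen : ∀ (q : ℝ × ℝ × ℝ) (v w : ℝ × ℝ × ℝ),
      fderiv ℝ (fun q' => fderiv ℝ Ψf q' v) q w = fderiv ℝ (fun q' => fderiv ℝ Ψf q' w) q v := by
    intro q v w
    have hsymm := (hΨfC.contDiffAt (x := q)).isSymmSndFDerivAt (by rw [minSmoothness_of_isRCLikeNormedField]; exact WithTop.coe_le_coe.mpr le_top)
    have h1 : ∀ (v w : ℝ × ℝ × ℝ),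
        fderiv ℝ (fun q' => fderiv ℝ Ψf q' v) q w = fderiv ℝ (fderiv ℝ Ψf) q w v := by
      intro v w
      rw [fderiv_clm_apply (hDΨC.differentiable (by simp) q)
        (differentiableAt_const v)]
      simp
    rw [h1, h1, hsymm]
  have hswapVrT : ∀ q, fderiv ℝ Vr q (0, 0, 1) = fderiv ℝ T q (1, 0, 0) := fun q =>
    hswapgen q (1, 0, 0) (0, 0, 1)
  have hswapVsT : ∀ q, fderiv ℝ Vs q (0, 0, 1) = fderiv ℝ T q (0, 1, 0) := fun q =>
    hswapgen q (0, 1, 0) (0, 0, 1)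
  -- geodesic equation in terms of T
  have hgeo : ∀ r s t,
      fderiv ℝ T (r, s, t) (0, 0, 1) + Γ (Ψ r s t) (T (r, s, t)) (T (r, s, t)) = 0 := by
    intro r s t
    have h := hΨgeo r s t
    rw [covD] at h
    rw [hderivΨ r s] at h
    rwa [(slice3_3 (hTC.differentiable (by simp) (r, s, t))).deriv] at h
  -- constancy of the speed along each geodesic
  have hTT : ∀ r s t, G (Ψ r s t) (T (r, s, t)) (T (r, s, t))
      = G (Ψ r s 0) (T (r, s, 0)) (T (r, s, 0)) := by
    intro r s t
    have hd : ∀ u : ℝ, HasDerivAt (fun z => G (Ψ r s z) (T (r, s, z)) (T (r, s, z))) 0 u := by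
      intro u
      have h := hasDerivAt_G_cov hGsmooth hGsymm hGadd hGsmul hcompat (hT r s u)
        (slice3_3 (hTC.differentiable (by simp) (r, s, u)))
        (slice3_3 (hTC.differentiable (by simp) (r, s, u)))
      rw [hgeo r s u] at h
      have hz1 : G (Ψ r s u) 0 (T (r, s, u)) = 0 := G_zero_left hGsmul _ _
      have hz2 : G (Ψ r s u) (T (r, s, u)) 0 = 0 := by
        rw [hGsymm]; exact G_zero_left hGsmul _ _
      rw [hz1, hz2] at h
      simpa using h
    have hconst := is_const_of_deriv_eq_zero (f := fun z => G (Ψ r s z) (T (r, s, z)) (T (r, s, z)))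
      (fun z => (hd z).differentiableAt) (fun z => (hd z).deriv) t 0
    exact hconst
  -- the function F2 and the length formula
  set F2 : ℝ × ℝ → ℝ := fun q => G (Ψf (q.1, q.2, 0)) (T (q.1, q.2, 0)) (T (q.1, q.2, 0))
    with hF2def
  have hφF : ∀ r s, φ r s = ρ₀ * Real.sqrt (F2 (r, s)) := by
    intro r s
    rw [hφ r s]
    have hfun : (fun t => Real.sqrt (G (Ψ r s t) (deriv (Ψ r s) t) (deriv (Ψ r s) t)))
        = fun _ : ℝ => Real.sqrt (F2 (r, s)) := by
      funext t
      rw [hderivΨ r s]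
      exact congrArg Real.sqrt (hTT r s t)
    rw [hfun, intervalIntegral.integral_const, smul_eq_mul]
    ring
  have hj : ContDiff ℝ (⊤ : ℕ∞) (fun q : ℝ × ℝ => ((q.1, q.2, (0:ℝ)) : ℝ × ℝ × ℝ)) :=
    contDiff_fst.prodMk (contDiff_snd.prodMk contDiff_const)
  have hF2C : ContDiff ℝ (⊤ : ℕ∞) F2 :=
    hGsmooth.comp ((hΨfC.comp hj).prodMk ((hTC.comp hj).prodMk (hTC.comp hj)))
  have he : e = T (r₀, s₀, 0) := (hT r₀ s₀ 0).deriv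
  have hp : p = Ψf (r₀, s₀, 0) := rfl
  have hF2one : F2 (r₀, s₀) = 1 := by
    have h := hρ₀
    rw [hφF r₀ s₀] at h
    have h2 : ρ₀ * 1 = ρ₀ * Real.sqrt (F2 (r₀, s₀)) := by simpa using h
    have hsq : Real.sqrt (F2 (r₀, s₀)) = 1 := (mul_left_cancel₀ hρpos.ne' h2).symm
    exact Real.sqrt_eq_one.mp hsq
  have hGpe : G p e e = 1 := by rw [hp, he]; exact hF2one
  -- the key radial-derivative formula for F2
  set N : ℝ × ℝ → ℝ := fun q => G (Ψf (q.1, q.2, 0)) (Vr (q.1, q.2, 0)) (T (q.1, q.2, 0))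
    with hNdef
  have hdF2r : ∀ r s, HasDerivAt (fun x => F2 (x, s)) (-(2 / ρ₀) * N (r, s)) r := by
    intro r s
    have hKr : ∀ t : ℝ, HasDerivAt (fun x => F2 (x, s))
        (G (Ψ r s t) (fderiv ℝ T (r, s, t) (1, 0, 0) + Γ (Ψ r s t) (Vr (r, s, t)) (T (r, s, t)))
            (T (r, s, t))
          + G (Ψ r s t) (T (r, s, t))
            (fderiv ℝ T (r, s, t) (1, 0, 0)
              + Γ (Ψ r s t) (Vr (r, s, t)) (T (r, s, t)))) r := by
      intro t
      have h := hasDerivAt_G_cov hGsmooth hGsymm hGadd hGsmul hcompat (hVrD r s t)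
        (slice3_1 (hTC.differentiable (by simp) (r, s, t)))
        (slice3_1 (hTC.differentiable (by simp) (r, s, t)))
      have heq : (fun x => G (Ψ x s t) (T (x, s, t)) (T (x, s, t))) = fun x => F2 (x, s) := by
        funext x; exact hTT x s t
      rwa [heq] at h
    set k : ℝ → ℝ := fun t =>
      G (Ψ r s t) (fderiv ℝ T (r, s, t) (1, 0, 0) + Γ (Ψ r s t) (Vr (r, s, t)) (T (r, s, t)))
          (T (r, s, t)) with hkdef
    have hKr2 : ∀ t, HasDerivAt (fun x => F2 (x, s)) (2 * k t) r := by
      intro t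
      have h := hKr t
      have hval : G (Ψ r s t)
            (fderiv ℝ T (r, s, t) (1, 0, 0) + Γ (Ψ r s t) (Vr (r, s, t)) (T (r, s, t)))
            (T (r, s, t))
          + G (Ψ r s t) (T (r, s, t))
            (fderiv ℝ T (r, s, t) (1, 0, 0) + Γ (Ψ r s t) (Vr (r, s, t)) (T (r, s, t)))
          = 2 * k t := by
        rw [hGsymm (Ψ r s t) (T (r, s, t))]
        rw [hkdef]
        ring
      rwa [hval] at h
    have hkconst : ∀ t, k t = k 0 := by
      intro t
      have := (hKr2 t).unique (hKr2 0)
      linarith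
    have hh : ∀ t : ℝ, HasDerivAt (fun z => G (Ψ r s z) (Vr (r, s, z)) (T (r, s, z))) (k 0) t := by
      intro t
      have h := hasDerivAt_G_cov hGsmooth hGsymm hGadd hGsmul hcompat (hT r s t)
        (slice3_3 (hVrC.differentiable (by simp) (r, s, t)))
        (slice3_3 (hTC.differentiable (by simp) (r, s, t)))
      rw [hgeo r s t] at h
      have hz : G (Ψ r s t) (Vr (r, s, t)) 0 = 0 := by
        rw [hGsymm]; exact G_zero_left hGsmul _ _
      rw [hz] at h
      have h1 : fderiv ℝ Vr (r, s, t) (0, 0, 1) + Γ (Ψ r s t) (T (r, s, t)) (Vr (r, s, t))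
          = fderiv ℝ T (r, s, t) (1, 0, 0) + Γ (Ψ r s t) (Vr (r, s, t)) (T (r, s, t)) := by
        rw [hswapVrT, hΓsymm]
      rw [h1] at h
      have h2 : G (Ψ r s t)
          (fderiv ℝ T (r, s, t) (1, 0, 0) + Γ (Ψ r s t) (Vr (r, s, t)) (T (r, s, t)))
          (T (r, s, t)) + 0 = k 0 := by
        rw [add_zero]; exact hkconst t
      rwa [h2] at h
    have haff : ∀ t : ℝ, G (Ψ r s t) (Vr (r, s, t)) (T (r, s, t))
        = G (Ψ r s 0) (Vr (r, s, 0)) (T (r, s, 0)) + k 0 * t := by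
      intro t
      have hd : ∀ u : ℝ, HasDerivAt
          (fun z => G (Ψ r s z) (Vr (r, s, z)) (T (r, s, z)) - k 0 * z) 0 u := by
        intro u
        have := (hh u).sub (((hasDerivAt_id u).const_mul (k 0)))
        simpa [Pi.sub_def] using this
      have hcst := is_const_of_deriv_eq_zero
        (f := fun z => G (Ψ r s z) (Vr (r, s, z)) (T (r, s, z)) - k 0 * z)
        (fun u => (hd u).differentiableAt) (fun u => (hd u).deriv) t 0
      simp only [mul_zero, sub_zero] at hcst
      linarith [hcst]
    have hVrρ : Vr (r, s, ρ₀) = 0 := by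
      have h1 := (hVrD r s ρ₀).deriv
      have h2 : (fun x => Ψ x s ρ₀) = fun _ => γ s := funext fun x => hΨρ x s
      rw [h2, deriv_const] at h1
      exact h1.symm
    have hend := haff ρ₀
    rw [hVrρ, G_zero_left hGsmul] at hend
    have hk0 : 2 * k 0 = -(2 / ρ₀) * N (r, s) := by
      have hNval : N (r, s) = G (Ψ r s 0) (Vr (r, s, 0)) (T (r, s, 0)) := rfl
      rw [hNval]
      have hρne : ρ₀ ≠ 0 := hρpos.ne'
      field_simp
      linarith [hend]
    have h := hKr2 0
    rwa [hk0] at h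
  -- first-variation formula for pd1 φ
  have hpd1 : ∀ r s, 0 < F2 (r, s) → pd1 φ r s = -(N (r, s)) / Real.sqrt (F2 (r, s)) := by
    intro r s hpos
    have hcomp : HasDerivAt (fun x => Real.sqrt (F2 (x, s)))
        (1 / (2 * Real.sqrt (F2 (r, s))) * (-(2 / ρ₀) * N (r, s))) r :=
      (Real.hasDerivAt_sqrt hpos.ne').comp r (hdF2r r s)
    have hmul := hcomp.const_mul ρ₀
    have hfun : (fun x => φ x s) = fun x => ρ₀ * Real.sqrt (F2 (x, s)) :=
      funext fun x => hφF x s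
    simp only [pd1]
    rw [hfun, hmul.deriv]
    have hs0 : Real.sqrt (F2 (r, s)) ≠ 0 := Real.sqrt_ne_zero'.mpr hpos
    have hρne : ρ₀ ≠ 0 := hρpos.ne'
    field_simp
  -- neighborhood facts
  have hq0pos : (0:ℝ) < F2 (r₀, s₀) := by rw [hF2one]; norm_num
  have hUopen : IsOpen {q : ℝ × ℝ | 0 < F2 q} := isOpen_lt continuous_const hF2C.continuous
  have hUev : ∀ᶠ q : ℝ × ℝ in nhds (r₀, s₀), 0 < F2 q :=
    (hUopen.eventually_mem hq0pos).mono fun q hq => hq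
  set Φ : ℝ × ℝ → ℝ := fun q => ρ₀ * Real.sqrt (F2 q) with hΦdef
  have hΦat : ∀ q : ℝ × ℝ, 0 < F2 q → ContDiffAt ℝ (⊤ : ℕ∞) Φ q := by
    intro q hq
    exact contDiffAt_const.mul ((Real.contDiffAt_sqrt hq.ne').comp q hF2C.contDiffAt)
  have hΦdiffev : ∀ᶠ q : ℝ × ℝ in nhds (r₀, s₀), DifferentiableAt ℝ Φ q :=
    hUev.mono fun q hq => ((hΦat q hq).differentiableAt (by simp))
  have hΦq0 : ContDiffAt ℝ (⊤ : ℕ∞) Φ (r₀, s₀) := hΦat _ hq0pos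
  have hfdΦ : DifferentiableAt ℝ (fderiv ℝ Φ) (r₀, s₀) :=
    (hΦq0.fderiv_right (m := 1) (WithTop.coe_le_coe.mpr le_top)).differentiableAt (by simp)
  set D2 := fderiv ℝ (fderiv ℝ Φ) (r₀, s₀) with hD2def
  have hLHS : pd1 (pd2 φ) r₀ s₀ = D2 (1, 0) (0, 1) := by
    have hpd2φ : (fun r => pd2 φ r s₀) = fun r => deriv (fun y => Φ (r, y)) s₀ := by
      funext r
      simp only [pd2]
      congr 1
      funext y
      exact hφF r y
    have hcont : ContinuousAt (fun r : ℝ => ((r, s₀) : ℝ × ℝ)) r₀ :=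
      (continuous_id.prodMk continuous_const).continuousAt
    have hev : (fun r => deriv (fun y => Φ (r, y)) s₀) =ᶠ[nhds r₀]
        fun r => fderiv ℝ Φ (r, s₀) (0, 1) := by
      filter_upwards [hcont.eventually hΦdiffev] with r hr
      exact (slice2_2 hr).deriv
    simp only [pd1]
    rw [hpd2φ, hev.deriv_eq]
    have h2 := (slice2_1 hfdΦ).clm_apply (hasDerivAt_const r₀ ((0:ℝ), (1:ℝ)))
    simpa using h2.deriv
  have hevA : (fun s => pd1 φ r₀ s) =ᶠ[nhds s₀]
      fun s => -(N (r₀, s)) / Real.sqrt (F2 (r₀, s)) := by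
    have hcont : ContinuousAt (fun s : ℝ => ((r₀, s) : ℝ × ℝ)) s₀ :=
      (continuous_const.prodMk continuous_id).continuousAt
    filter_upwards [hcont.eventually hUev] with s hs
    exact hpd1 r₀ s hs
  have hevB : (fun s => pd1 φ r₀ s) =ᶠ[nhds s₀] fun s => fderiv ℝ Φ (r₀, s) (1, 0) := by
    have hcont : ContinuousAt (fun s : ℝ => ((r₀, s) : ℝ × ℝ)) s₀ :=
      (continuous_const.prodMk continuous_id).continuousAt
    filter_upwards [hcont.eventually hΦdiffev] with s hs
    simp only [pd1]
    have hfun : (fun x => φ x s) = fun x => Φ (x, s) := funext fun x => hφF x s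
    rw [hfun]
    exact (slice2_1 hs).deriv
  have hsymm2 : D2 (1, 0) (0, 1) = D2 (0, 1) (1, 0) :=
    (hΦq0.isSymmSndFDerivAt (by rw [minSmoothness_of_isRCLikeNormedField]; exact WithTop.coe_le_coe.mpr le_top)) _ _
  -- identify DtW0 and V 0
  have hW : W = fun t => Vs (r₀, s₀, t) := funext fun t => (hVsD r₀ s₀ t).deriv
  have hW0 : W 0 = 0 := by
    show deriv (fun s => Ψ r₀ s 0) s₀ = 0
    have h2 : (fun s => Ψ r₀ s 0) = fun _ => η r₀ := funext fun s => hΨ0 r₀ s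
    rw [h2, deriv_const]
  have hderivW0 : deriv W 0 = fderiv ℝ T (r₀, s₀, 0) (0, 1, 0) := by
    rw [hW, (slice3_3 (hVsC.differentiable (by simp) (r₀, s₀, 0))).deriv]
    exact hswapVsT _
  have hDtW0 : DtW0 = fderiv ℝ T (r₀, s₀, 0) (0, 1, 0) := by
    show deriv W 0 + Γ (σ 0) (deriv σ 0) (W 0) = _
    rw [hW0, Γ_zero_right hΓsmul, add_zero, hderivW0]
  have hV0 : V 0 = Vr (r₀, s₀, 0) := (hVrD r₀ s₀ 0).deriv
  -- base point is independent of s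
  have hbase : ∀ s, Ψf (r₀, s, 0) = Ψf (r₀, s₀, 0) := by
    intro s
    show Ψ r₀ s 0 = Ψ r₀ s₀ 0
    rw [hΨ0 r₀ s, hΨ0 r₀ s₀]
  have hVrconst : ∀ s, Vr (r₀, s, 0) = Vr (r₀, s₀, 0) := by
    intro s
    have h1 := (hVrD r₀ s 0).deriv
    have h2 := (hVrD r₀ s₀ 0).deriv
    have h3 : (fun x => Ψ x s 0) = fun x => Ψ x s₀ 0 := by
      funext x; rw [hΨ0 x s, hΨ0 x s₀]
    rw [← h1, ← h2, h3]
  have hNfun : (fun s => N (r₀, s)) = fun s => G p (Vr (r₀, s₀, 0)) (T (r₀, s, 0)) := by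
    funext s
    show G (Ψf (r₀, s, 0)) (Vr (r₀, s, 0)) (T (r₀, s, 0)) = _
    rw [hbase s, hVrconst s, ← hp]
  -- derivatives in s at s₀
  have hTs : HasDerivAt (fun s => T (r₀, s, 0)) (fderiv ℝ T (r₀, s₀, 0) (0, 1, 0)) s₀ :=
    slice3_2 (hTC.differentiable (by simp) _)
  have hNs : HasDerivAt (fun s => N (r₀, s)) (G p (Vr (r₀, s₀, 0)) DtW0) s₀ := by
    rw [hNfun, hDtW0]
    have h := hasDerivAt_G3 hGsmooth hGsymm hGadd hGsmul (hasDerivAt_const s₀ p)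
      (hasDerivAt_const s₀ (Vr (r₀, s₀, 0))) hTs
    simpa [G_zero_left hGsmul] using h
  have hF2fun : (fun s => F2 (r₀, s)) = fun s => G p (T (r₀, s, 0)) (T (r₀, s, 0)) := by
    funext s
    show G (Ψf (r₀, s, 0)) (T (r₀, s, 0)) (T (r₀, s, 0)) = _
    rw [hbase s, ← hp]
  have hF2s : HasDerivAt (fun s => F2 (r₀, s)) (2 * G p DtW0 e) s₀ := by
    rw [hF2fun]
    have h := hasDerivAt_G3 hGsmooth hGsymm hGadd hGsmul (hasDerivAt_const s₀ p) hTs hTs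
    have hval : fderiv ℝ (fun y => G y (T (r₀, s₀, 0)) (T (r₀, s₀, 0))) p 0
        + G p (fderiv ℝ T (r₀, s₀, 0) (0, 1, 0)) (T (r₀, s₀, 0))
        + G p (T (r₀, s₀, 0)) (fderiv ℝ T (r₀, s₀, 0) (0, 1, 0)) = 2 * G p DtW0 e := by
      rw [ContinuousLinearMap.map_zero, hDtW0, ← he, hGsymm p e]
      ring
    rwa [hval] at h
  have hsqrts : HasDerivAt (fun s => Real.sqrt (F2 (r₀, s))) (G p DtW0 e) s₀ := by
    have hne : F2 (r₀, s₀) ≠ 0 := by rw [hF2one]; norm_num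
    have h := (Real.hasDerivAt_sqrt hne).comp s₀ hF2s
    have hval : 1 / (2 * Real.sqrt (F2 (r₀, s₀))) * (2 * G p DtW0 e) = G p DtW0 e := by
      rw [hF2one, Real.sqrt_one]; ring
    rwa [hval] at h
  have hN0 : N (r₀, s₀) = G p (Vr (r₀, s₀, 0)) e := by
    show G (Ψf (r₀, s₀, 0)) (Vr (r₀, s₀, 0)) (T (r₀, s₀, 0)) = _
    rw [← hp, ← he]
  have hAd : HasDerivAt (fun s => -(N (r₀, s)) / Real.sqrt (F2 (r₀, s)))
      (-(G p (Vr (r₀, s₀, 0)) DtW0) + G p (Vr (r₀, s₀, 0)) e * G p DtW0 e) s₀ := by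
    have hne : Real.sqrt (F2 (r₀, s₀)) ≠ 0 := by rw [hF2one, Real.sqrt_one]; norm_num
    have h := (hNs.neg).div hsqrts hne
    rw [Pi.neg_apply] at h
    have hval : (-(G p (Vr (r₀, s₀, 0)) DtW0) * Real.sqrt (F2 (r₀, s₀))
        - -(N (r₀, s₀)) * (G p DtW0 e)) / (Real.sqrt (F2 (r₀, s₀)))^2
        = -(G p (Vr (r₀, s₀, 0)) DtW0) + G p (Vr (r₀, s₀, 0)) e * G p DtW0 e := by
      rw [hF2one, Real.sqrt_one, hN0]; ring
    rwa [hval] at h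
  have hRHSd : deriv (fun s => -(N (r₀, s)) / Real.sqrt (F2 (r₀, s))) s₀ = D2 (0, 1) (1, 0) := by
    have heq2 : (fun s => -(N (r₀, s)) / Real.sqrt (F2 (r₀, s))) =ᶠ[nhds s₀]
        fun s => fderiv ℝ Φ (r₀, s) (1, 0) := hevA.symm.trans hevB
    rw [heq2.deriv_eq]
    have h2 := (slice2_2 hfdΦ).clm_apply (hasDerivAt_const s₀ ((1:ℝ), (0:ℝ)))
    simpa using h2.deriv
  -- right-linearity helpers
  have Gsubr : ∀ x u v w : E, G x u (v - w) = G x u v - G x u w := by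
    intro x u v w
    rw [hGsymm, G_sub_left hGadd hGsmul, hGsymm x v u, hGsymm x w u]
  have Gsmulr : ∀ (x : E) (u : E) (a : ℝ) (w : E), G x u (a • w) = a * G x u w := by
    intro x u a w
    rw [hGsymm, hGsmul, hGsymm]
  have hexpand : G p (perp (V 0)) (perp DtW0)
      = G p (Vr (r₀, s₀, 0)) DtW0 - G p (Vr (r₀, s₀, 0)) e * G p DtW0 e := by
    rw [hV0]
    show G p (Vr (r₀, s₀, 0) - G p (Vr (r₀, s₀, 0)) e • e) (DtW0 - G p DtW0 e • e) = _
    rw [G_sub_left hGadd hGsmul, Gsubr, Gsubr, hGsmul, Gsmulr, Gsmulr, hGsmul, hGpe,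
      hGsymm p e DtW0]
    ring
  rw [hLHS, hsymm2, ← hRHSd, hAd.deriv, hexpand]
  ring


end ChartModel
end

section
/- Let Ψ be the variation through geodesics from η(r) to γ(s) in a nonpositively curved simply connected manifold, and (r₀,s₀) with connecting unit speed geodesic σ. Then ∂²_{rr}φ(r₀,s₀) = −⟨D_t V₀^⊥, V₀^⊥⟩, where V_t is the Jacobi field along σ with V₀ = η'(r₀) and V_{ρ₀} = 0, and φ(r,s) = d(η(r),γ(s)). -/
open Set


section VariationHelpers

variable {E' F : Type*} [NormedAddCommGroup E'] [NormedSpace ℝ E']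
  [NormedAddCommGroup F] [NormedSpace ℝ F]

lemma slice1_hasDerivAt {f : ℝ × ℝ → F} {a b : ℝ} (hf : DifferentiableAt ℝ f (a, b)) :
    HasDerivAt (fun r => f (r, b)) (fderiv ℝ f (a, b) (1, 0)) a := by
  have h1 : HasDerivAt (fun r : ℝ => ((r, b) : ℝ × ℝ)) (1, 0) a :=
    HasDerivAt.prodMk (hasDerivAt_id a) (hasDerivAt_const a b)
  exact hf.hasFDerivAt.comp_hasDerivAt a h1

lemma slice2_hasDerivAt {f : ℝ × ℝ → F} {a b : ℝ} (hf : DifferentiableAt ℝ f (a, b)) :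
    HasDerivAt (fun t => f (a, t)) (fderiv ℝ f (a, b) (0, 1)) b := by
  have h1 : HasDerivAt (fun t : ℝ => ((a, t) : ℝ × ℝ)) (0, 1) b :=
    HasDerivAt.prodMk (hasDerivAt_const b a) (hasDerivAt_id b)
  exact hf.hasFDerivAt.comp_hasDerivAt b h1

lemma line_hasDerivAt {f : E' → F} {x w : E'} (hf : DifferentiableAt ℝ f x) :
    HasDerivAt (fun s : ℝ => f (x + s • w)) (fderiv ℝ f x w) 0 := by
  have hline : HasDerivAt (fun s : ℝ => x + s • w) w 0 := by
    simpa using ((hasDerivAt_id (0 : ℝ)).smul_const w).const_add x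
  have hf' : HasFDerivAt f (fderiv ℝ f x) (x + (0 : ℝ) • w) := by
    simpa using hf.hasFDerivAt
  simpa [Function.comp_def] using hf'.comp_hasDerivAt 0 hline

lemma metric_comp_hasDerivAt {G : E' → E' → E' → ℝ}
    (hGsmooth : ContDiff ℝ (⊤ : ℕ∞) (fun p : E' × E' × E' => G p.1 p.2.1 p.2.2))
    (hGsymm : ∀ x u v, G x u v = G x v u)
    (hGadd : ∀ x u v w, G x (u + v) w = G x u w + G x v w)
    (hGsmul : ∀ (x : E') (a : ℝ) (u w : E'), G x (a • u) w = a * G x u w)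
    {c X Y : ℝ → E'} {c' X' Y' : E'} {t : ℝ} {v : ℝ}
    (hc : HasDerivAt c c' t) (hX : HasDerivAt X X' t) (hY : HasDerivAt Y Y' t)
    (hv : fderiv ℝ (fun y => G y (X t) (Y t)) (c t) c'
        + G (c t) X' (Y t) + G (c t) (X t) Y' = v) :
    HasDerivAt (fun s => G (c s) (X s) (Y s)) v t := by
  have hGadd3 : ∀ x u v w, G x u (v + w) = G x u v + G x u w := fun x u v w => by
    rw [hGsymm, hGadd, hGsymm x v u, hGsymm x w u]
  have hGsmul3 : ∀ (x : E') (a : ℝ) (u w : E'), G x u (a • w) = a * G x u w := fun x a u w => by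
    rw [hGsymm, hGsmul, hGsymm]
  have hgdiff : Differentiable ℝ (fun p : E' × E' × E' => G p.1 p.2.1 p.2.2) :=
    hGsmooth.differentiable (by simp)
  have hGy : ∀ u w : E', Differentiable ℝ (fun y => G y u w) := fun u w =>
    (hGsmooth.comp (contDiff_id.prodMk (contDiff_const (c := (u, w))))).differentiable (by simp)
  have h1 : HasDerivAt (fun s => G (c s) (X s) (Y s))
      (fderiv ℝ (fun p : E' × E' × E' => G p.1 p.2.1 p.2.2) (c t, X t, Y t) (c', X', Y')) t :=
    (hgdiff _).hasFDerivAt.comp_hasDerivAt t (HasDerivAt.prodMk hc (HasDerivAt.prodMk hX hY))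
  have h2 : HasDerivAt
      (fun s : ℝ => (fun p : E' × E' × E' => G p.1 p.2.1 p.2.2) ((c t, X t, Y t) + s • (c', X', Y')))
      (fderiv ℝ (fun p : E' × E' × E' => G p.1 p.2.1 p.2.2) (c t, X t, Y t) (c', X', Y')) 0 :=
    line_hasDerivAt (hgdiff _)
  have hfun : (fun s : ℝ =>
        (fun p : E' × E' × E' => G p.1 p.2.1 p.2.2) ((c t, X t, Y t) + s • (c', X', Y')))
      = fun s : ℝ => G (c t + s • c') (X t) (Y t) + s * G (c t + s • c') X' (Y t)
        + (s * G (c t + s • c') (X t) Y' + s * (s * G (c t + s • c') X' Y')) := by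
    funext s
    show G (c t + s • c') (X t + s • X') (Y t + s • Y') = _
    rw [hGadd, hGsmul, hGadd3, hGadd3, hGsmul3, hGsmul3]
    ring
  have hA : HasDerivAt (fun s : ℝ => G (c t + s • c') (X t) (Y t))
      (fderiv ℝ (fun y => G y (X t) (Y t)) (c t) c') 0 := line_hasDerivAt ((hGy _ _) _)
  have hB : HasDerivAt (fun s : ℝ => G (c t + s • c') X' (Y t))
      (fderiv ℝ (fun y => G y X' (Y t)) (c t) c') 0 := line_hasDerivAt ((hGy _ _) _)
  have hC : HasDerivAt (fun s : ℝ => G (c t + s • c') (X t) Y')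
      (fderiv ℝ (fun y => G y (X t) Y') (c t) c') 0 := line_hasDerivAt ((hGy _ _) _)
  have hD : HasDerivAt (fun s : ℝ => G (c t + s • c') X' Y')
      (fderiv ℝ (fun y => G y X' Y') (c t) c') 0 := line_hasDerivAt ((hGy _ _) _)
  have hbig := (hA.add ((hasDerivAt_id (0 : ℝ)).mul hB)).add
      (((hasDerivAt_id (0 : ℝ)).mul hC).add ((hasDerivAt_id (0 : ℝ)).mul
        ((hasDerivAt_id (0 : ℝ)).mul hD)))
  have hval := (hfun ▸ h2).unique hbig
  simp only [Pi.mul_apply, id_eq, zero_smul, add_zero, one_mul, zero_mul, mul_zero] at hval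
  rw [hval] at h1
  rw [← hv]
  exact h1

lemma fderiv_fderiv_apply {f : ℝ × ℝ → F} (hf : ContDiff ℝ (⊤ : ℕ∞) f) (q u w : ℝ × ℝ) :
    fderiv ℝ (fun y => fderiv ℝ f y w) q u = fderiv ℝ (fderiv ℝ f) q u w := by
  rw [fderiv_clm_apply (((hf.fderiv_right (m := (⊤ : ℕ∞)) (by simp)).differentiable (by simp)) q)
    (differentiableAt_const w)]
  simp

lemma fderiv_swap_apply {f : ℝ × ℝ → F} (hf : ContDiff ℝ (⊤ : ℕ∞) f) (q u w : ℝ × ℝ) :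
    fderiv ℝ (fderiv ℝ f) q u w = fderiv ℝ (fderiv ℝ f) q w u :=
  second_derivative_symmetric (fun y => ((hf.differentiable (by simp)) y).hasFDerivAt)
    (((hf.fderiv_right (m := (⊤ : ℕ∞)) (by simp)).differentiable (by simp) q).hasFDerivAt) u w

end VariationHelpers


section ChartModel

variable {E : Type*} [NormedAddCommGroup E] [InnerProductSpace ℝ E]

/-- Formula (3.11) of Remark 3.2: with the setup of the second variation formula (global chart for the nonpositively curved simply connected manifold, metric G, Levi-Civita connection Γ, disjoint unit speed geodesics η, γ, variation Ψ through connecting geodesics, φ(r,s) = d(η(r),γ(s)), σ the unit speed connecting geodesic at (r₀,s₀), V = ∂_rΨ(r₀,s₀,·) the Jacobi field with V₀ = η'(r₀), V_{ρ₀} = 0):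
∂²_{rr}φ(r₀,s₀) = −⟨D_t V₀^⊥, V₀^⊥⟩. -/
theorem stmt_11
    (G : E → E → E → ℝ) (Γ : E → E → E → E)
    (η γ : ℝ → E) (Ψ : ℝ → ℝ → ℝ → E) (φ : ℝ → ℝ → ℝ) (ρ₀ r₀ s₀ : ℝ)
    -- the metric tensor: smooth, symmetric, bilinear, positive definite
    (hGsmooth : ContDiff ℝ (⊤ : ℕ∞) (fun p : E × E × E => G p.1 p.2.1 p.2.2))
    (hGsymm : ∀ x u v, G x u v = G x v u)
    (hGadd : ∀ x u v w, G x (u + v) w = G x u w + G x v w)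
    (hGsmul : ∀ (x : E) (a : ℝ) (u w : E), G x (a • u) w = a * G x u w)
    (hGpos : ∀ (x : E) (v : E), v ≠ 0 → 0 < G x v v)
    -- the Levi-Civita connection: smooth, symmetric (torsion-free), bilinear, compatible with G
    (hΓsmooth : ContDiff ℝ (⊤ : ℕ∞) (fun p : E × E × E => Γ p.1 p.2.1 p.2.2))
    (hΓsymm : ∀ x u v, Γ x u v = Γ x v u)
    (hΓadd : ∀ x u v w, Γ x u (v + w) = Γ x u v + Γ x u w)
    (hΓsmul : ∀ (x : E) (a : ℝ) (u w : E), Γ x u (a • w) = a • Γ x u w)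
    (hcompat : ∀ x u v w,
      fderiv ℝ (fun y => G y v w) x u = G x (Γ x u v) w + G x v (Γ x u w))
    -- nonpositive sectional curvature
    (hnonpos : ∀ x u v, G x (curvOp Γ x u v v) u ≤ 0)
    -- `η, γ` are disjoint unit speed geodesics on `[0,1]`
    (hηgeo : ∀ r, covD Γ η (deriv η) r = 0)
    (hγgeo : ∀ s, covD Γ γ (deriv γ) s = 0)
    (hηunit : ∀ r, G (η r) (deriv η r) (deriv η r) = 1)
    (hγunit : ∀ s, G (γ s) (deriv γ s) (deriv γ s) = 1)
    (hdisj : ∀ r ∈ Icc (0:ℝ) 1, ∀ s ∈ Icc (0:ℝ) 1, η r ≠ γ s)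
    -- `Ψ` is the smooth variation through connecting geodesics
    (hΨsmooth : ContDiff ℝ (⊤ : ℕ∞) (fun p : ℝ × ℝ × ℝ => Ψ p.1 p.2.1 p.2.2))
    (hΨgeo : ∀ r s t, covD Γ (Ψ r s) (deriv (Ψ r s)) t = 0)
    (hΨ0 : ∀ r s, Ψ r s 0 = η r) (hΨρ : ∀ r s, Ψ r s ρ₀ = γ s)
    -- `φ(r,s) = d(η(r),γ(s))` is the length of the connecting geodesic
    (hφ : ∀ r s, φ r s =
      ∫ t in (0:ℝ)..ρ₀, Real.sqrt (G (Ψ r s t) (deriv (Ψ r s) t) (deriv (Ψ r s) t)))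
    (hρpos : 0 < ρ₀) (hρ₀ : ρ₀ = φ r₀ s₀)
    (hr₀ : r₀ ∈ Icc (0:ℝ) 1) (hs₀ : s₀ ∈ Icc (0:ℝ) 1) :
    let σ := Ψ r₀ s₀
    let p := σ 0
    let e := deriv σ 0
    let V : ℝ → E := fun t => deriv (fun r => Ψ r s₀ t) r₀
    let DtV0 := covD Γ σ V 0
    let perp : E → E := fun X => X - (G p X e) • e
    pd1 (pd1 φ) r₀ s₀ = -(G p (perp DtV0) (perp (V 0))) := by
  have hGadd3 : ∀ x u v w, G x u (v + w) = G x u v + G x u w := fun x u v w => by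
    rw [hGsymm, hGadd, hGsymm x v u, hGsymm x w u]
  have hGneg2 : ∀ x u w, G x (-u) w = -G x u w := fun x u w => by
    rw [← neg_one_smul ℝ u, hGsmul]; ring
  have hGneg3 : ∀ x u w, G x u (-w) = -G x u w := fun x u w => by
    rw [hGsymm, hGneg2, hGsymm]
  have hGsmul3 : ∀ (x : E) (a : ℝ) (u w : E), G x u (a • w) = a * G x u w := fun x a u w => by
    rw [hGsymm, hGsmul, hGsymm]
  have hGzero2 : ∀ x w, G x (0 : E) w = 0 := fun x w => by
    have := hGsmul x 0 0 w; simpa using this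
  have hGsub2 : ∀ x u v w, G x (u - v) w = G x u w - G x v w := fun x u v w => by
    rw [sub_eq_add_neg, hGadd, hGneg2]; ring
  have hGsub3 : ∀ x u v w, G x u (v - w) = G x u v - G x u w := fun x u v w => by
    rw [hGsymm, hGsub2, hGsymm x v u, hGsymm x w u]
  have hρne : ρ₀ ≠ 0 := ne_of_gt hρpos
  -- the variation with the second parameter frozen at s₀
  set Φ : ℝ × ℝ → E := fun q => Ψ q.1 s₀ q.2 with hΦdef
  have hΦ : ContDiff ℝ (⊤ : ℕ∞) Φ :=
    hΨsmooth.comp (contDiff_fst.prodMk ((contDiff_const (c := s₀)).prodMk contDiff_snd))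
  set T2 : ℝ × ℝ → E := fun q => fderiv ℝ Φ q (0, 1) with hT2def
  set V2 : ℝ × ℝ → E := fun q => fderiv ℝ Φ q (1, 0) with hV2def
  have hT2 : ContDiff ℝ (⊤ : ℕ∞) T2 := (hΦ.fderiv_right (by simp)).clm_apply contDiff_const
  have hV2 : ContDiff ℝ (⊤ : ℕ∞) V2 := (hΦ.fderiv_right (by simp)).clm_apply contDiff_const
  have hΦd : ∀ q : ℝ × ℝ, DifferentiableAt ℝ Φ q := fun q => (hΦ.differentiable (by simp)) q
  have fT : ∀ r t, HasDerivAt (fun t' => Φ (r, t')) (T2 (r, t)) t := fun r t =>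
    slice2_hasDerivAt (hΦd _)
  have fV : ∀ r t, HasDerivAt (fun r' => Φ (r', t)) (V2 (r, t)) r := fun r t =>
    slice1_hasDerivAt (hΦd _)
  have f1 : ∀ r t, deriv (Ψ r s₀) t = T2 (r, t) := fun r t => (fT r t).deriv
  have f2 : ∀ r t, deriv (fun r' => Ψ r' s₀ t) r = V2 (r, t) := fun r t => (fV r t).deriv
  -- geodesic equation for the connecting geodesics
  have fT' : ∀ r t, HasDerivAt (fun t' => T2 (r, t'))
      (-Γ (Φ (r, t)) (T2 (r, t)) (T2 (r, t))) t := by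
    intro r t
    have hdiff : DifferentiableAt ℝ (fun t' => T2 (r, t')) t :=
      (slice2_hasDerivAt ((hT2.differentiable (by simp)) (r, t))).differentiableAt
    have hgeo := hΨgeo r s₀ t
    have hDeq : deriv (Ψ r s₀) = fun t' => T2 (r, t') := funext fun t' => f1 r t'
    simp only [covD, hDeq] at hgeo
    have hd : deriv (fun t' => T2 (r, t')) t = -Γ (Ψ r s₀ t) (T2 (r, t)) (T2 (r, t)) :=
      eq_neg_of_add_eq_zero_left hgeo
    have h2 := hdiff.hasDerivAt
    rw [hd] at h2
    exact h2
  -- the speed is constant along each connecting geodesic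
  have hQt : ∀ r t, HasDerivAt (fun t' => G (Φ (r, t')) (T2 (r, t')) (T2 (r, t'))) 0 t := by
    intro r t
    refine metric_comp_hasDerivAt hGsmooth hGsymm hGadd hGsmul (fT r t) (fT' r t) (fT' r t) ?_
    simp only [hcompat, hGneg2, hGneg3]
    ring
  have hQconst : ∀ r t, G (Φ (r, t)) (T2 (r, t)) (T2 (r, t))
      = G (Φ (r, 0)) (T2 (r, 0)) (T2 (r, 0)) := fun r t =>
    is_const_of_deriv_eq_zero (fun t' => (hQt r t').differentiableAt)
      (fun t' => (hQt r t').deriv) t 0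
  set q : ℝ → ℝ := fun r => G (Φ (r, 0)) (T2 (r, 0)) (T2 (r, 0)) with hqdef
  have hQconst' : ∀ r t, G (Φ (r, t)) (T2 (r, t)) (T2 (r, t)) = q r := hQconst
  -- symmetry of second derivatives
  have hswap : ∀ r t, fderiv ℝ T2 (r, t) (1, 0) = deriv (fun t' => V2 (r, t')) t := by
    intro r t
    have e1 : fderiv ℝ T2 (r, t) (1, 0) = fderiv ℝ (fderiv ℝ Φ) (r, t) (1, 0) (0, 1) := by
      rw [hT2def]; exact fderiv_fderiv_apply hΦ (r, t) (1, 0) (0, 1)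
    have e2 : deriv (fun t' => V2 (r, t')) t = fderiv ℝ (fderiv ℝ Φ) (r, t) (0, 1) (1, 0) := by
      have h := (slice2_hasDerivAt (f := V2) ((hV2.differentiable (by simp)) (r, t))).deriv
      rw [h, hV2def]
      exact fderiv_fderiv_apply hΦ (r, t) (0, 1) (1, 0)
    rw [e1, e2, fderiv_swap_apply hΦ]
  -- the r-derivative of the squared speed
  have hqd : ∀ r t, HasDerivAt q
      (2 * G (Φ (r, t)) (deriv (fun t' => V2 (r, t')) t
        + Γ (Φ (r, t)) (T2 (r, t)) (V2 (r, t))) (T2 (r, t))) r := by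
    intro r t
    have hTr : HasDerivAt (fun r' => T2 (r', t)) (fderiv ℝ T2 (r, t) (1, 0)) r :=
      slice1_hasDerivAt ((hT2.differentiable (by simp)) (r, t))
    have h : HasDerivAt (fun r' => G (Φ (r', t)) (T2 (r', t)) (T2 (r', t)))
        (2 * G (Φ (r, t)) (deriv (fun t' => V2 (r, t')) t
          + Γ (Φ (r, t)) (T2 (r, t)) (V2 (r, t))) (T2 (r, t))) r := by
      refine metric_comp_hasDerivAt hGsmooth hGsymm hGadd hGsmul (fV r t) hTr hTr ?_
      simp only [hcompat, hswap r t, hGadd]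
      rw [hΓsymm (Φ (r, t)) (V2 (r, t)) (T2 (r, t))]
      rw [hGsymm (Φ (r, t)) (T2 (r, t)) (Γ (Φ (r, t)) (T2 (r, t)) (V2 (r, t)))]
      rw [hGsymm (Φ (r, t)) (T2 (r, t)) (deriv (fun t' => V2 (r, t')) t)]
      ring
    have hfe : (fun r' => G (Φ (r', t)) (T2 (r', t)) (T2 (r', t))) = q :=
      funext fun r' => hQconst' r' t
    exact hfe ▸ h
  have hqP : ∀ r t, deriv q r = 2 * G (Φ (r, t)) (deriv (fun t' => V2 (r, t')) t
      + Γ (Φ (r, t)) (T2 (r, t)) (V2 (r, t))) (T2 (r, t)) := fun r t => (hqd r t).deriv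
  -- the t-derivative of the inner product of the variation field with the velocity
  have hPd : ∀ r t, HasDerivAt (fun t' => G (Φ (r, t')) (V2 (r, t')) (T2 (r, t')))
      (G (Φ (r, t)) (deriv (fun t' => V2 (r, t')) t
        + Γ (Φ (r, t)) (T2 (r, t)) (V2 (r, t))) (T2 (r, t))) t := by
    intro r t
    have hVt : HasDerivAt (fun t' => V2 (r, t')) (deriv (fun t' => V2 (r, t')) t) t :=
      (slice2_hasDerivAt ((hV2.differentiable (by simp)) (r, t))).differentiableAt.hasDerivAt
    refine metric_comp_hasDerivAt hGsmooth hGsymm hGadd hGsmul (fT r t) hVt (fT' r t) ?_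
    simp only [hcompat, hGneg3, hGadd]
    ring
  -- endpoint values
  have hV2ρ : ∀ r, V2 (r, ρ₀) = 0 := by
    intro r
    have h0 : HasDerivAt (fun r' => Φ (r', ρ₀)) (V2 (r, ρ₀)) r := fV r ρ₀
    have h1 : (fun r' => Φ (r', ρ₀)) = fun _ => γ s₀ := funext fun r' => hΨρ r' s₀
    rw [h1] at h0
    exact h0.unique (hasDerivAt_const r (γ s₀))
  set A : ℝ → ℝ := fun r => G (Φ (r, 0)) (V2 (r, 0)) (T2 (r, 0)) with hAdef
  have hAq : ∀ r, deriv q r = -(2 * A r) / ρ₀ := by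
    intro r
    have hW : ∀ t : ℝ, HasDerivAt (fun t' => G (Φ (r, t')) (V2 (r, t')) (T2 (r, t'))
        - deriv q r / 2 * t') 0 t := by
      intro t
      have h2 : HasDerivAt (fun t' : ℝ => deriv q r / 2 * t') (deriv q r / 2) t := by
        simpa using (hasDerivAt_id t).const_mul (deriv q r / 2)
      have h3 := (hPd r t).sub h2
      have hval : G (Φ (r, t)) (deriv (fun t' => V2 (r, t')) t
          + Γ (Φ (r, t)) (T2 (r, t)) (V2 (r, t))) (T2 (r, t)) - deriv q r / 2 = 0 := by
        rw [hqP r t]; ring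
      rw [hval] at h3
      exact h3
    have hc := is_const_of_deriv_eq_zero (fun t => (hW t).differentiableAt)
      (fun t => (hW t).deriv) ρ₀ 0
    rw [hV2ρ r, hGzero2] at hc
    have hA0 : A r = G (Φ (r, 0)) (V2 (r, 0)) (T2 (r, 0)) := rfl
    field_simp
    rw [hA0]
    nlinarith [hc]
  -- the length function in terms of the speed
  have hφeq : ∀ r, φ r s₀ = ρ₀ * Real.sqrt (q r) := by
    intro r
    rw [hφ]
    have hint : ∀ t : ℝ, Real.sqrt (G (Ψ r s₀ t) (deriv (Ψ r s₀) t) (deriv (Ψ r s₀) t))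
        = Real.sqrt (q r) := by
      intro t
      rw [f1 r t, show (Ψ r s₀ t : E) = Φ (r, t) from rfl, hQconst' r t]
    rw [intervalIntegral.integral_congr (g := fun _ => Real.sqrt (q r)) (fun t _ => hint t)]
    rw [intervalIntegral.integral_const]
    simp [smul_eq_mul]
  have hq0 : q r₀ = 1 := by
    have h1 : ρ₀ = ρ₀ * Real.sqrt (q r₀) := by rw [← hφeq]; exact hρ₀
    have h3 : ρ₀ * 1 = ρ₀ * Real.sqrt (q r₀) := by rw [mul_one]; exact h1
    exact Real.sqrt_eq_one.mp (mul_left_cancel₀ hρne h3).symm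
  have hqdiff : ∀ r, HasDerivAt q (-(2 * A r) / ρ₀) r := by
    intro r
    have h := (hqd r 0).differentiableAt.hasDerivAt
    rw [hAq r] at h
    exact h
  have hqpos : ∀ᶠ x in nhds r₀, 0 < q x := by
    have hcont : ContinuousAt q r₀ := (hqdiff r₀).differentiableAt.continuousAt
    have hmem : q ⁻¹' Set.Ioi (0 : ℝ) ∈ nhds r₀ :=
      hcont.preimage_mem_nhds (Ioi_mem_nhds (by rw [hq0]; norm_num))
    filter_upwards [hmem] with x hx using hx
  -- first derivative of φ in r, near r₀
  have hpd1 : ∀ᶠ x in nhds r₀, pd1 φ x s₀ = -A x / Real.sqrt (q x) := by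
    filter_upwards [hqpos] with x hx
    have hsqrtpos : 0 < Real.sqrt (q x) := Real.sqrt_pos.mpr hx
    have hsq : HasDerivAt (fun r => Real.sqrt (q r))
        (1 / (2 * Real.sqrt (q x)) * (-(2 * A x) / ρ₀)) x :=
      (Real.hasDerivAt_sqrt (ne_of_gt hx)).comp x (hqdiff x)
    have hF : HasDerivAt (fun r => φ r s₀)
        (ρ₀ * (1 / (2 * Real.sqrt (q x)) * (-(2 * A x) / ρ₀))) x := by
      have h := hsq.const_mul ρ₀
      have hfe : (fun r => ρ₀ * Real.sqrt (q r)) = fun r => φ r s₀ :=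
        funext fun r => (hφeq r).symm
      rw [hfe] at h
      exact h
    have hthis : pd1 φ x s₀ = ρ₀ * (1 / (2 * Real.sqrt (q x)) * (-(2 * A x) / ρ₀)) := by
      simp only [pd1]
      exact hF.deriv
    rw [hthis]
    field_simp
  -- data at the point (r₀, 0)
  set D0 : E := deriv (fun t' => V2 (r₀, t')) 0
      + Γ (Φ (r₀, 0)) (T2 (r₀, 0)) (V2 (r₀, 0)) with hD0def
  have hVfun : (fun t => deriv (fun r => Ψ r s₀ t) r₀) = fun t => V2 (r₀, t) :=
    funext fun t => f2 r₀ t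
  have hcov : covD Γ (Ψ r₀ s₀) (fun t => deriv (fun r => Ψ r s₀ t) r₀) 0 = D0 := by
    simp only [covD, hVfun, f1, f2]
    rfl
  have hT0d : HasDerivAt (fun r => T2 (r, 0)) (deriv (fun t' => V2 (r₀, t')) 0) r₀ := by
    have h1 := slice1_hasDerivAt (f := T2) ((hT2.differentiable (by simp)) (r₀, 0))
    rw [hswap r₀ 0] at h1
    exact h1
  have hηd : ∀ r, deriv η r = V2 (r, 0) := by
    intro r
    have hfe : (fun r' => Φ (r', 0)) = η := funext fun r' => hΨ0 r' s₀
    rw [← hfe]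
    exact (fV r 0).deriv
  have hV0d : HasDerivAt (fun r => V2 (r, 0)) (-Γ (Φ (r₀, 0)) (V2 (r₀, 0)) (V2 (r₀, 0))) r₀ := by
    have hdiff : DifferentiableAt ℝ (fun r => V2 (r, 0)) r₀ :=
      (slice1_hasDerivAt ((hV2.differentiable (by simp)) (r₀, 0))).differentiableAt
    have hgeo := hηgeo r₀
    have hde : deriv η = fun r => V2 (r, 0) := funext hηd
    simp only [covD, hde] at hgeo
    have hd := eq_neg_of_add_eq_zero_left hgeo
    have h2 := hdiff.hasDerivAt
    rw [hd] at h2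
    rw [show (η r₀ : E) = Φ (r₀, 0) from (hΨ0 r₀ s₀).symm] at h2
    exact h2
  have hAd : HasDerivAt A (G (Φ (r₀, 0)) (V2 (r₀, 0)) D0) r₀ := by
    have h : HasDerivAt (fun r => G (Φ (r, 0)) (V2 (r, 0)) (T2 (r, 0)))
        (G (Φ (r₀, 0)) (V2 (r₀, 0)) D0) r₀ := by
      refine metric_comp_hasDerivAt hGsmooth hGsymm hGadd hGsmul (fV r₀ 0) hV0d hT0d ?_
      simp only [hcompat, hGneg2, hD0def, hGadd3]
      rw [hΓsymm (Φ (r₀, 0)) (V2 (r₀, 0)) (T2 (r₀, 0))]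
      ring
    exact h
  have hDe : G (Φ (r₀, 0)) D0 (T2 (r₀, 0)) = -(A r₀) / ρ₀ := by
    have h1 := hqP r₀ 0
    rw [hAq r₀] at h1
    rw [hD0def]
    have hA0 : A r₀ = G (Φ (r₀, 0)) (V2 (r₀, 0)) (T2 (r₀, 0)) := rfl
    field_simp at h1 ⊢
    nlinarith [h1]
  have hGee : G (Φ (r₀, 0)) (T2 (r₀, 0)) (T2 (r₀, 0)) = 1 := hq0
  -- second derivative of φ in r at r₀
  have hsqd : HasDerivAt (fun x => Real.sqrt (q x))
      (1 / (2 * Real.sqrt (q r₀)) * (-(2 * A r₀) / ρ₀)) r₀ :=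
    (Real.hasDerivAt_sqrt (by rw [hq0]; norm_num)).comp r₀ (hqdiff r₀)
  have hdiv : HasDerivAt (fun x => -A x / Real.sqrt (q x))
      ((-(G (Φ (r₀, 0)) (V2 (r₀, 0)) D0) * Real.sqrt (q r₀)
         - -A r₀ * (1 / (2 * Real.sqrt (q r₀)) * (-(2 * A r₀) / ρ₀))) / Real.sqrt (q r₀) ^ 2)
      r₀ :=
    (hAd.neg).div hsqd (by rw [hq0, Real.sqrt_one]; norm_num)
  have hLHS : pd1 (pd1 φ) r₀ s₀ = -(G (Φ (r₀, 0)) (V2 (r₀, 0)) D0) - A r₀ ^ 2 / ρ₀ := by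
    have h1 : pd1 (pd1 φ) r₀ s₀ = deriv (fun x => -A x / Real.sqrt (q x)) r₀ := by
      simp only [pd1]
      exact Filter.EventuallyEq.deriv_eq hpd1
    rw [h1, hdiv.deriv, hq0, Real.sqrt_one]
    field_simp
  show pd1 (pd1 φ) r₀ s₀ =
    -(G (Ψ r₀ s₀ 0)
        (covD Γ (Ψ r₀ s₀) (fun t => deriv (fun r => Ψ r s₀ t) r₀) 0
          - G (Ψ r₀ s₀ 0) (covD Γ (Ψ r₀ s₀) (fun t => deriv (fun r => Ψ r s₀ t) r₀) 0)
              (deriv (Ψ r₀ s₀) 0) • deriv (Ψ r₀ s₀) 0)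
        (deriv (fun r => Ψ r s₀ 0) r₀
          - G (Ψ r₀ s₀ 0) (deriv (fun r => Ψ r s₀ 0) r₀) (deriv (Ψ r₀ s₀) 0)
              • deriv (Ψ r₀ s₀) 0))
  rw [hcov, show (Ψ r₀ s₀ 0 : E) = Φ (r₀, 0) from rfl, f1, f2, hLHS]
  simp only [hGsub2, hGsub3, hGsmul, hGsmul3]
  rw [hGee, hDe]
  rw [hGsymm (Φ (r₀, 0)) (T2 (r₀, 0)) (V2 (r₀, 0))]
  rw [hGsymm (Φ (r₀, 0)) D0 (V2 (r₀, 0))]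
  have hA0 : A r₀ = G (Φ (r₀, 0)) (V2 (r₀, 0)) (T2 (r₀, 0)) := rfl
  rw [← hA0]
  field_simp
  ring


end ChartModel
end

section
/- Let σ : [0,ρ₀] → M̃ be a unit speed geodesic in the universal cover M̃ of a compact Riemannian manifold (pullback metric), and let X_t be a vector field along σ solving the inhomogeneous Jacobi equation D_t²X + R(X, σ')σ' + S = 0 with X₀ = 0 and |S(t)| ≤ B for all t. If X also satisfies X_{ρ₀} = 0, then there exist constants C, C' > 0 depending only on M such that |X_t| ≤ C(1 + B) e^{C' ρ₀} for all t ∈ [0,ρ₀]. -/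
/-!
With `m = max |X|` on `[0, ρ₀]`, the function `|X_t|²` satisfies
`(|X|²)'' = 2|X'|² - 2⟪R X, X⟫ - 2⟪S, X⟫ ≥ -2Bm` and vanishes at both endpoints, so by the
maximum principle it lies below the parabola `Bm t (ρ₀ - t) ≤ Bm ρ₀²/4`. Evaluated where `|X|`
is maximal this gives `m ≤ Bρ₀²/4 ≤ B e^{ρ₀}/2`.
-/

open scoped RealInnerProductSpace

open Set

theorem le_parabola_of_hasDerivAt2_ge {g g' g'' : ℝ → ℝ} {a b c : ℝ}
    (hg : ContinuousOn g (Icc a b)) (hg' : ∀ t ∈ Ioo a b, HasDerivAt g (g' t) t)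
    (hg'' : ∀ t ∈ Ioo a b, HasDerivAt g' (g'' t) t) (hc : ∀ t ∈ Ioo a b, -(2 * c) ≤ g'' t)
    (ha : g a ≤ 0) (hb : g b ≤ 0) :
    ∀ t ∈ Icc a b, g t ≤ c * ((t - a) * (b - t)) := by
  set h : ℝ → ℝ := fun t ↦ g t - c * ((t - a) * (b - t))
  have hconv : ConvexOn ℝ (Icc a b) h := by
    refine convexOn_of_hasDerivWithinAt2_nonneg (f' := fun t ↦ g' t - c * (a + b - 2 * t))
      (f'' := fun t ↦ g'' t + 2 * c) (convex_Icc a b) (hg.sub (by fun_prop)) ?_ ?_ ?_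
    all_goals simp only [interior_Icc]
    · intro t ht
      refine ((hg' t ht).sub (((hasDerivAt_id' t).sub_const a).mul
        ((hasDerivAt_id' t).const_sub b) |>.const_mul c)).hasDerivWithinAt.congr_deriv ?_
      ring
    · intro t ht
      refine ((hg'' t ht).sub (((hasDerivAt_id' t).const_mul 2).const_sub (a + b)
        |>.const_mul c)).hasDerivWithinAt.congr_deriv ?_
      ring
    · intro t ht
      linarith [hc t ht]
  intro t ht
  have hab : a ≤ b := ht.1.trans ht.2
  have hmax := hconv.le_on_segment (left_mem_Icc.2 hab) (right_mem_Icc.2 hab)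
    (segment_eq_Icc hab ▸ ht)
  have : max (h a) (h b) ≤ 0 := max_le (by simpa [h] using ha) (by simpa [h] using hb)
  simp only [h] at hmax
  linarith

section Jacobi

variable {E : Type*} [NormedAddCommGroup E] [InnerProductSpace ℝ E]
  {X S : ℝ → E} {Rc : ℝ → E → E} {a b B m : ℝ}

theorem norm_sq_le_of_jacobi (hX : Differentiable ℝ X) (hX' : Differentiable ℝ (deriv X))
    (hjac : ∀ t ∈ Ioo a b, deriv (deriv X) t + Rc t (X t) + S t = 0)
    (hRc : ∀ t ∈ Ioo a b, ∀ v, ⟪Rc t v, v⟫ ≤ 0) (hS : ∀ t ∈ Ioo a b, ‖S t‖ ≤ B)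
    (hm : ∀ t ∈ Icc a b, ‖X t‖ ≤ m) (ha : X a = 0) (hb : X b = 0) :
    ∀ t ∈ Icc a b, ‖X t‖ ^ 2 ≤ B * m * ((t - a) * (b - t)) := by
  refine le_parabola_of_hasDerivAt2_ge (g' := fun t ↦ 2 * ⟪X t, deriv X t⟫)
    (g'' := fun t ↦ 2 * (⟪X t, deriv (deriv X) t⟫ + ⟪deriv X t, deriv X t⟫))
    (hX.continuous.norm.pow 2).continuousOn (fun t _ ↦ (hX t).hasDerivAt.norm_sq)
    (fun t _ ↦ ((hX t).hasDerivAt.inner ℝ (hX' t).hasDerivAt).const_mul 2) ?_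
    (by simp [ha]) (by simp [hb])
  intro t ht
  have hX'' : deriv (deriv X) t = -Rc t (X t) - S t := by
    linear_combination (norm := abel) hjac t ht
  have hSX : ⟪X t, S t⟫ ≤ B * m := calc
    ⟪X t, S t⟫ ≤ ‖S t‖ * ‖X t‖ := real_inner_comm (X t) _ ▸ real_inner_le_norm _ _
    _ ≤ B * m := mul_le_mul (hS t ht) (hm t (Ioo_subset_Icc_self ht)) (norm_nonneg _)
      ((norm_nonneg _).trans (hS t ht))
  have hRX : ⟪X t, Rc t (X t)⟫ ≤ 0 := real_inner_comm (X t) _ ▸ hRc t ht (X t)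
  simp only [hX'', inner_sub_right, inner_neg_right]
  nlinarith [real_inner_self_nonneg (x := deriv X t)]

theorem norm_le_of_jacobi (hX : Differentiable ℝ X) (hX' : Differentiable ℝ (deriv X))
    (hjac : ∀ t ∈ Ioo a b, deriv (deriv X) t + Rc t (X t) + S t = 0)
    (hRc : ∀ t ∈ Ioo a b, ∀ v, ⟪Rc t v, v⟫ ≤ 0) (hS : ∀ t ∈ Icc a b, ‖S t‖ ≤ B)
    (ha : X a = 0) (hb : X b = 0) :
    ∀ t ∈ Icc a b, ‖X t‖ ≤ B * (b - a) ^ 2 / 4 := by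
  intro t ht
  obtain ⟨t₀, ht₀, hmax⟩ := isCompact_Icc.exists_isMaxOn ⟨t, ht⟩ hX.continuous.norm.continuousOn
  set m := ‖X t₀‖
  have hB : 0 ≤ B := (norm_nonneg _).trans (hS t ht)
  have hsq : m ^ 2 ≤ B * m * ((t₀ - a) * (b - t₀)) :=
    norm_sq_le_of_jacobi hX hX' hjac hRc (fun s hs ↦ hS s (Ioo_subset_Icc_self hs))
      (fun s hs ↦ hmax hs) ha hb t₀ ht₀
  have hparabola : (t₀ - a) * (b - t₀) ≤ (b - a) ^ 2 / 4 := by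
    nlinarith [sq_nonneg (2 * t₀ - a - b)]
  have hm : m ≤ B * (b - a) ^ 2 / 4 := by
    rcases (norm_nonneg (X t₀) : 0 ≤ m).eq_or_lt with hm0 | hm0
    · simp only [m, ← hm0]; positivity
    · nlinarith [mul_le_mul_of_nonneg_left hparabola (mul_nonneg hB hm0.le)]
  exact (hmax ht).trans hm

end Jacobi

/-- The Jacobi equation is written in a parallel orthonormal frame along `σ`, so that `D_t` is
`deriv`, and `Rc t = R(·, σ') σ'`, which is bounded since `M` is compact and satisfies
`⟪Rc t v, v⟫ ≤ 0` since `M̃` is nonpositively curved. -/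
theorem stmt12_general {E : Type*} [NormedAddCommGroup E] [InnerProductSpace ℝ E]
    (K : ℝ) :
    ∃ C C' : ℝ, 0 < C ∧ 0 < C' ∧
      ∀ (ρ₀ : ℝ) (X S : ℝ → E) (Rc : ℝ → E → E) (B : ℝ),
        0 < ρ₀ → 0 ≤ B →
        ContDiff ℝ 2 X → Continuous S →
        (∀ t, deriv (deriv X) t + Rc t (X t) + S t = 0) →
        (∀ t, IsLinearMap ℝ (Rc t)) →
        (∀ (t : ℝ) (v : E), ‖Rc t v‖ ≤ K * ‖v‖) →
        (∀ (t : ℝ) (v : E), ⟪Rc t v, v⟫ ≤ 0) →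
        (∀ t ∈ Set.Icc 0 ρ₀, ‖S t‖ ≤ B) →
        X 0 = 0 → X ρ₀ = 0 →
        ∀ t ∈ Set.Icc 0 ρ₀, ‖X t‖ ≤ C * (1 + B) * Real.exp (C' * ρ₀) := by
  refine ⟨1, 1, one_pos, one_pos, ?_⟩
  intro ρ₀ X S Rc B hρ₀ hB hX _ hjac _ _ hRc hS hX0 hXρ t ht
  have hX' : ContDiff ℝ 1 (deriv X) :=
    (contDiff_succ_iff_deriv.mp (by exact_mod_cast hX : ContDiff ℝ (1 + 1) X)).2.2
  have hXt : ‖X t‖ ≤ B * (ρ₀ - 0) ^ 2 / 4 :=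
    norm_le_of_jacobi (hX.differentiable two_ne_zero) (hX'.differentiable one_ne_zero)
      (fun t _ ↦ hjac t) (fun t _ ↦ hRc t) hS hX0 hXρ t ht
  have hexp : ρ₀ ^ 2 / 2 ≤ Real.exp ρ₀ := by
    simpa using Real.pow_div_factorial_le_exp (x := ρ₀) hρ₀.le 2
  calc ‖X t‖ ≤ B * (ρ₀ - 0) ^ 2 / 4 := hXt
    _ ≤ 1 * (1 + B) * Real.exp (1 * ρ₀) := by
      rw [sub_zero, one_mul, one_mul]
      nlinarith [mul_le_mul_of_nonneg_left hexp hB, Real.exp_pos ρ₀]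

/-- Gronwall/boundary-value bound of Lemma 3.4: a solution of the inhomogeneous Jacobi
equation `D_t²X + R(X,σ')σ' + S = 0` along a unit speed geodesic `σ : [0,ρ₀] → M̃`, with
`X₀ = X_{ρ₀} = 0` and `|S| ≤ B`, satisfies `|X_t| ≤ C(1+B)e^{C'ρ₀}` with `C, C'` depending
only on `M` (i.e. on the uniform curvature bound `K`).  Setting: parallel orthonormal
trivialization along `σ` (covariant derivative = `deriv`); the curvature operator
`Rc t = R(·,σ')σ'` is uniformly bounded (`M` compact) and nonpositive
(`M̃` nonpositively curved, hence without conjugate points). -/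
theorem stmt12 {E : Type*} [NormedAddCommGroup E] [InnerProductSpace ℝ E]
    (K : ℝ) (hK : 0 ≤ K) :
    ∃ C C' : ℝ, 0 < C ∧ 0 < C' ∧
      ∀ (ρ₀ : ℝ) (X S : ℝ → E) (Rc : ℝ → E → E) (B : ℝ),
        0 < ρ₀ → 0 ≤ B →
        ContDiff ℝ 2 X → Continuous S →
        (∀ t, deriv (deriv X) t + Rc t (X t) + S t = 0) →
        (∀ t, IsLinearMap ℝ (Rc t)) →
        (∀ (t : ℝ) (v : E), ‖Rc t v‖ ≤ K * ‖v‖) →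
        (∀ (t : ℝ) (v : E), ⟪Rc t v, v⟫ ≤ 0) →
        (∀ t ∈ Set.Icc 0 ρ₀, ‖S t‖ ≤ B) →
        X 0 = 0 → X ρ₀ = 0 →
        ∀ t ∈ Set.Icc 0 ρ₀, ‖X t‖ ≤ C * (1 + B) * Real.exp (C' * ρ₀) :=
  stmt12_general K
end
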